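/- The map h : ℂ² → ℂ × ℝ, h(z,w) = (2·z·conj(w), |z|² − |w|²), induces a homeomorphism from the quotient of ℂ² by the Hopf circle action onto ℂ × ℝ. -/

import Mathlib

/-!
`hopfModel` is continuous, constant on orbits and surjective, and it is proper because
`‖2 z w̄‖² + (|z|² - |w|²)² = (|z|² + |w|²)²` gives `‖p‖² ≤ 2 ‖hopfModel p‖`; a proper
surjection is closed, hence a quotient map. The same identity shows that equal images have
`|z| = |z'|` and `|w| = |w'|`, and then `z' / z` (or `w' / w`) is a unit scalar carrying one
point to the other, so the fibres are exactly the orbits. A quotient map whose fibres are the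
classes of `r` descends to a homeomorphism on `Quot r`.
-/

/-- The quadratic model of the Hopf quotient map. -/
noncomputable def hopfModel (p : ℂ × ℂ) : ℂ × ℝ :=
  (2 * p.1 * (starRingEnd ℂ) p.2, ‖p.1‖ ^ 2 - ‖p.2‖ ^ 2)

/-- The orbit relation of the Hopf circle action on `ℂ²`. -/
def hopfRel (p q : ℂ × ℂ) : Prop :=
  ∃ lam : ℂ, ‖lam‖ = 1 ∧ q = (lam * p.1, lam * p.2)

open Filter Topology ComplexConjugate

lemma Topology.IsQuotientMap.isHomeomorph_quotLift {X Y : Type*} [TopologicalSpace X]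
    [TopologicalSpace Y] {r : X → X → Prop} {f : X → Y} (hf : IsQuotientMap f)
    (hr : ∀ x y, r x y ↔ f x = f y) :
    IsHomeomorph (Quot.lift f fun x y h ↦ (hr x y).1 h) := by
  refine isHomeomorph_iff_isQuotientMap_injective.2
    ⟨isQuotientMap_quot_mk.of_comp_isQuotientMap hf, ?_⟩
  rintro ⟨x⟩ ⟨y⟩ h
  exact Quot.sound ((hr x y).2 h)

lemma continuous_hopfModel : Continuous hopfModel := by
  unfold hopfModel; fun_prop

lemma norm_hopfModel_fst_sq_add_snd_sq (p : ℂ × ℂ) :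
    ‖(hopfModel p).1‖ ^ 2 + (hopfModel p).2 ^ 2 = (‖p.1‖ ^ 2 + ‖p.2‖ ^ 2) ^ 2 := by
  simp only [hopfModel, norm_mul, Complex.norm_conj, Complex.norm_two]
  ring

lemma sq_norm_le_two_mul_norm_hopfModel (p : ℂ × ℂ) : ‖p‖ ^ 2 ≤ 2 * ‖hopfModel p‖ := by
  have h₁ : ‖(hopfModel p).1‖ ≤ ‖hopfModel p‖ := norm_fst_le _
  have h₂ : |(hopfModel p).2| ≤ ‖hopfModel p‖ := norm_snd_le (hopfModel p)
  have hsq : (‖p.1‖ ^ 2 + ‖p.2‖ ^ 2) ^ 2 ≤ (2 * ‖hopfModel p‖) ^ 2 := by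
    rw [← norm_hopfModel_fst_sq_add_snd_sq, ← sq_abs (hopfModel p).2]
    nlinarith [norm_nonneg (hopfModel p).1, abs_nonneg (hopfModel p).2]
  have hp : ‖p‖ ^ 2 ≤ ‖p.1‖ ^ 2 + ‖p.2‖ ^ 2 := by
    rcases max_choice ‖p.1‖ ‖p.2‖ with h | h <;>
      rw [Prod.norm_def, h] <;> nlinarith [sq_nonneg ‖p.1‖, sq_nonneg ‖p.2‖]
  exact hp.trans ((pow_le_pow_iff_left₀ (by positivity) (by positivity) two_ne_zero).1 hsq)

lemma isProperMap_hopfModel : IsProperMap hopfModel := by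
  refine isProperMap_iff_tendsto_cocompact.2 ⟨continuous_hopfModel, ?_⟩
  rw [← Metric.cobounded_eq_cocompact, ← Metric.cobounded_eq_cocompact,
    ← tendsto_norm_atTop_iff_cobounded]
  have : Tendsto (fun p : ℂ × ℂ ↦ ‖p‖ ^ 2 / 2) (Bornology.cobounded _) atTop :=
    ((tendsto_pow_atTop two_ne_zero).comp tendsto_norm_cobounded_atTop).atTop_div_const two_pos
  refine tendsto_atTop_mono (fun p ↦ ?_) this
  linarith [sq_norm_le_two_mul_norm_hopfModel p]

lemma hopfModel_unit_mul {lam : ℂ} (hlam : ‖lam‖ = 1) (p : ℂ × ℂ) :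
    hopfModel (lam * p.1, lam * p.2) = hopfModel p := by
  have h : lam * conj lam = 1 := by
    rw [Complex.mul_conj, Complex.normSq_eq_norm_sq, hlam]; norm_num
  refine Prod.ext ?_ ?_
  · simp only [hopfModel, map_mul]
    linear_combination 2 * p.1 * conj p.2 * h
  · simp only [hopfModel, norm_mul, hlam, one_mul]

lemma norm_eq_of_hopfModel_eq {p q : ℂ × ℂ} (h : hopfModel p = hopfModel q) :
    ‖q.1‖ = ‖p.1‖ ∧ ‖q.2‖ = ‖p.2‖ := by
  have hsum : ‖q.1‖ ^ 2 + ‖q.2‖ ^ 2 = ‖p.1‖ ^ 2 + ‖p.2‖ ^ 2 := by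
    refine (pow_left_inj₀ (by positivity) (by positivity) two_ne_zero).1 ?_
    rw [← norm_hopfModel_fst_sq_add_snd_sq, ← norm_hopfModel_fst_sq_add_snd_sq, h]
  have hdiff : ‖q.1‖ ^ 2 - ‖q.2‖ ^ 2 = ‖p.1‖ ^ 2 - ‖p.2‖ ^ 2 := (congrArg Prod.snd h).symm
  constructor <;> refine (pow_left_inj₀ (norm_nonneg _) (norm_nonneg _) two_ne_zero).1 ?_ <;>
    linarith

lemma Complex.exists_norm_eq_one_of_mul_conj_eq {z w z' w' : ℂ} (hz : z ≠ 0)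
    (hnorm : ‖z'‖ = ‖z‖) (h : z * conj w = z' * conj w') :
    ∃ lam : ℂ, ‖lam‖ = 1 ∧ z' = lam * z ∧ w' = lam * w := by
  refine ⟨z' / z, by rw [norm_div, hnorm, div_self (norm_ne_zero_iff.2 hz)],
    (div_mul_cancel₀ z' hz).symm, ?_⟩
  have hnormSq : z' * conj z' = z * conj z := by
    rw [Complex.mul_conj, Complex.mul_conj, Complex.normSq_eq_norm_sq, Complex.normSq_eq_norm_sq,
      hnorm]
  have hconj : conj z * w = conj z' * w' := by simpa using congrArg conj h
  have hcancel : conj z * (z * w') = conj z * (z' * w) := by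
    linear_combination -z' * hconj - w' * hnormSq
  rw [div_mul_eq_mul_div, eq_div_iff hz]
  linear_combination mul_left_cancel₀ ((map_ne_zero conj).2 hz) hcancel

lemma hopfRel_of_hopfModel_eq {p q : ℂ × ℂ} (h : hopfModel p = hopfModel q) : hopfRel p q := by
  obtain ⟨z, w⟩ := p
  obtain ⟨z', w'⟩ := q
  obtain ⟨hz, hw⟩ : ‖z'‖ = ‖z‖ ∧ ‖w'‖ = ‖w‖ := norm_eq_of_hopfModel_eq h
  have h₁ : z * conj w = z' * conj w' := by
    have := congrArg Prod.fst h
    simp only [hopfModel, mul_assoc] at this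
    exact mul_left_cancel₀ two_ne_zero this
  by_cases hz0 : z = 0
  · by_cases hw0 : w = 0
    · subst hz0 hw0
      refine ⟨1, norm_one, ?_⟩
      simp_all
    · have h₂ : w * conj z = w' * conj z' := by simpa [mul_comm] using congrArg conj h₁
      obtain ⟨lam, hlam, hw', hz'⟩ := Complex.exists_norm_eq_one_of_mul_conj_eq hw0 hw h₂
      exact ⟨lam, hlam, Prod.ext hz' hw'⟩
  · obtain ⟨lam, hlam, hz', hw'⟩ := Complex.exists_norm_eq_one_of_mul_conj_eq hz0 hz h₁
    exact ⟨lam, hlam, Prod.ext hz' hw'⟩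

lemma hopfRel_iff_hopfModel_eq (p q : ℂ × ℂ) : hopfRel p q ↔ hopfModel p = hopfModel q := by
  refine ⟨?_, hopfRel_of_hopfModel_eq⟩
  rintro ⟨lam, hlam, rfl⟩
  exact (hopfModel_unit_mul hlam p).symm

lemma hopfModel_surjective : Function.Surjective hopfModel := by
  rintro ⟨c, t⟩
  set r := √(‖c‖ ^ 2 + t ^ 2)
  have hr : r ^ 2 = ‖c‖ ^ 2 + t ^ 2 := Real.sq_sqrt (by positivity)
  have ht : |t| ≤ r := Real.abs_le_sqrt (by nlinarith [norm_nonneg c])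
  have hrt₁ : 0 ≤ (r + t) / 2 := by linarith [neg_abs_le t]
  have hrt₂ : 0 ≤ (r - t) / 2 := by linarith [le_abs_self t]
  -- `‖c‖ * u = c` holds at `c = 0` too, so no case split is needed.
  set u := Complex.exp (Complex.arg c * Complex.I)
  have hu : ‖u‖ = 1 := Complex.norm_exp_ofReal_mul_I _
  have hprod : √((r + t) / 2) * √((r - t) / 2) = ‖c‖ / 2 := by
    rw [← Real.sqrt_mul hrt₁, show (r + t) / 2 * ((r - t) / 2) = (‖c‖ / 2) ^ 2 by
      linear_combination hr / 4, Real.sqrt_sq (by positivity)]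
  refine ⟨(√((r + t) / 2), √((r - t) / 2) * conj u), Prod.ext ?_ ?_⟩
  · simp only [hopfModel, map_mul, Complex.conj_ofReal, Complex.conj_conj]
    calc 2 * (√((r + t) / 2) : ℂ) * (√((r - t) / 2) * u)
        = ((2 * (√((r + t) / 2) * √((r - t) / 2)) : ℝ) : ℂ) * u := by push_cast; ring
      _ = ‖c‖ * u := by rw [hprod]; push_cast; ring
      _ = c := Complex.norm_mul_exp_arg_mul_I c
  · simp only [hopfModel, norm_mul, Complex.norm_conj, hu, mul_one, Complex.norm_real,
      Real.norm_eq_abs, abs_of_nonneg (Real.sqrt_nonneg _), Real.sq_sqrt hrt₁, Real.sq_sqrt hrt₂]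
    ring

/-- `hopfModel` induces a homeomorphism from the quotient of `ℂ²` by the Hopf
circle action onto `ℂ × ℝ`. -/
theorem hopfModel_quotient_homeomorph :
    ∃ e : Quot hopfRel ≃ₜ (ℂ × ℝ), ∀ p : ℂ × ℂ, e (Quot.mk hopfRel p) = hopfModel p := by
  have hquot : IsQuotientMap hopfModel :=
    isProperMap_hopfModel.isClosedMap.isQuotientMap continuous_hopfModel hopfModel_surjective
  exact ⟨IsHomeomorph.homeomorph _ (hquot.isHomeomorph_quotLift hopfRel_iff_hopfModel_eq),
    fun _ ↦ rfl⟩
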